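/- For N = 3, β = 1, λ₁ = −1/2, the CDF of the largest eigenvalue of the Laguerre ensemble equals F_3^L(1;x) = √(2/π)(1−x)√x e^{-x/2} − √(2/π)√x e^{-3x/2} + erf(√(x/2)) − (1+x) e^{-x} erf(√(x/2)), where F_3^L(1;x) = (1/Z) ∫_0^x∫_0^x∫_0^x ∏_{l=1}^3 x_l^{-1/2} e^{-x_l/2} ∏_{1≤j<k≤3}|x_k−x_j| dx_1dx_2dx_3 with Z the normalizing constant making F_3^L(1;x) → 1 as x → ∞. -/

import Mathlib

open Real MeasureTheory Finset

/-- The error function `erf t = (2/√π) ∫₀ᵗ e^{-u²} du`. -/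
noncomputable def erf (t : ℝ) : ℝ :=
  (2 / Real.sqrt Real.pi) * ∫ u in (0:ℝ)..t, Real.exp (-u ^ 2)

/-- Normalization of the `N = 3`, `β = 1`, `λ₁ = -1/2` Laguerre ensemble:
`Z = 2^{N(N-1)/2 + N/2} ∏_{j=0}^{2} Γ(j/2+1/2) Γ((j+1)/2+1) / Γ(3/2)`. -/
noncomputable def Z3L : ℝ :=
  (2 : ℝ) ^ ((3 * (3 - 1) / 2 : ℝ) + 3 / 2) *
    ∏ j ∈ Finset.range 3,
      Real.Gamma ((j : ℝ) / 2 + 1 / 2) * Real.Gamma (((j : ℝ) + 1) / 2 + 1) /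
        Real.Gamma (3 / 2)

/-- The CDF of the largest eigenvalue for `N = 3`, `β = 1`, `λ₁ = -1/2`. -/
noncomputable def F3L (x : ℝ) : ℝ :=
  (1 / Z3L) *
    ∫ x1 in (0:ℝ)..x, ∫ x2 in (0:ℝ)..x, ∫ x3 in (0:ℝ)..x,
      (x1 ^ (-(1:ℝ)/2) * Real.exp (-x1 / 2)) *
      (x2 ^ (-(1:ℝ)/2) * Real.exp (-x2 / 2)) *
      (x3 ^ (-(1:ℝ)/2) * Real.exp (-x3 / 2)) *
      (|x2 - x1| * |x3 - x1| * |x3 - x2|)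

/-!
With `w t = t^(-1/2) e^(-t/2)`, `E t = erf √(t/2)` and `S t = √t e^(-t/2)` one has
`E' = w / √(2π)`, `S' = (1 - t) w / 2` and `w S = e^(-t)`. Hence, for polynomials `p`, `q` of
degree at most 2 and `r` of degree at most 1, `w (p + q E + r S)` has an explicit primitive in
`E`, `E²`, `S`, `S E` and `e^(-t)`. Splitting `[0, x]` where the absolute values change sign, the
innermost integral is, as a function of the middle variable, again of the form `p + q E + r S`;
after the middle integration the `E²`, `S E` and `e^(-t)` terms in the outer variable cancel, so
the outer integrand is of that form once more. Its primitive at `x` is `24 √(2π)` times the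
claimed expression, and `Z = 24 √(2π)`.
-/

noncomputable def laguerreWeight (t : ℝ) : ℝ := t ^ (-(1:ℝ)/2) * exp (-t / 2)

noncomputable def erfSqrtHalf (t : ℝ) : ℝ := erf (√(t / 2))

noncomputable def sqrtMulExp (t : ℝ) : ℝ := √t * exp (-t / 2)

lemma hasDerivAt_erf (y : ℝ) : HasDerivAt erf (2 / √π * exp (-y ^ 2)) y := by
  have hc : Continuous fun u : ℝ => exp (-u ^ 2) := by fun_prop
  exact (intervalIntegral.integral_hasDerivAt_right (hc.intervalIntegrable _ _)
    (hc.stronglyMeasurableAtFilter _ _) hc.continuousAt).const_mul _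

lemma continuous_erf : Continuous erf :=
  continuous_iff_continuousAt.2 fun y => (hasDerivAt_erf y).continuousAt

@[fun_prop]
lemma continuous_erfSqrtHalf : Continuous erfSqrtHalf :=
  continuous_erf.comp (by fun_prop)

@[fun_prop]
lemma continuous_sqrtMulExp : Continuous sqrtMulExp := by
  unfold sqrtMulExp; fun_prop

@[simp]
lemma erfSqrtHalf_zero : erfSqrtHalf 0 = 0 := by simp [erfSqrtHalf, erf]

@[simp]
lemma sqrtMulExp_zero : sqrtMulExp 0 = 0 := by simp [sqrtMulExp]

lemma laguerreWeight_eq_div_sqrt {t : ℝ} (ht : 0 ≤ t) : laguerreWeight t = exp (-t / 2) / √t := by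
  rw [laguerreWeight, show -(1:ℝ)/2 = -(1/2) by norm_num, rpow_neg ht, ← sqrt_eq_rpow,
    inv_mul_eq_div]

lemma sqrtMulExp_eq_mul_laguerreWeight {t : ℝ} (ht : 0 ≤ t) :
    sqrtMulExp t = t * laguerreWeight t := by
  rcases ht.eq_or_lt with rfl | ht
  · simp
  rw [laguerreWeight_eq_div_sqrt ht.le, sqrtMulExp, ← mul_div_assoc, mul_div_right_comm,
    div_sqrt]

lemma exp_neg_eq_mul_laguerreWeight_sq {t : ℝ} (ht : 0 < t) :
    exp (-t) = t * laguerreWeight t ^ 2 := by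
  rw [laguerreWeight_eq_div_sqrt ht.le, div_pow, sq_sqrt ht.le, ← exp_nat_mul]
  field_simp
  ring_nf

lemma hasDerivAt_erfSqrtHalf {t : ℝ} (ht : 0 < t) :
    HasDerivAt erfSqrtHalf (laguerreWeight t / √(2 * π)) t := by
  have h := (hasDerivAt_erf √(t / 2)).comp t
    ((hasDerivAt_sqrt (by positivity)).comp t ((hasDerivAt_id t).div_const 2))
  refine h.congr_deriv ?_
  rw [laguerreWeight_eq_div_sqrt ht.le, sq_sqrt (by positivity), id, sqrt_div ht.le,
    sqrt_mul zero_le_two, neg_div]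
  have h2 : √2 ^ 2 = 2 := sq_sqrt zero_le_two
  field_simp
  rw [h2]

lemma hasDerivAt_sqrtMulExp {t : ℝ} (ht : 0 < t) :
    HasDerivAt sqrtMulExp ((1 - t) / 2 * laguerreWeight t) t := by
  have h := (hasDerivAt_sqrt ht.ne').mul
    ((hasDerivAt_exp (-t / 2)).comp t ((hasDerivAt_neg t).div_const 2))
  refine h.congr_deriv ?_
  rw [laguerreWeight_eq_div_sqrt ht.le, Function.comp_apply]
  have ht2 : √t ^ 2 = t := sq_sqrt ht.le
  field_simp
  rw [ht2]
  ring

lemma intervalIntegrable_laguerreWeight_mul {φ : ℝ → ℝ} {l r : ℝ}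
    (hφ : ContinuousOn φ (Set.uIcc l r)) :
    IntervalIntegrable (fun t => laguerreWeight t * φ t) volume l r := by
  have h := (intervalIntegral.intervalIntegrable_rpow' (r := -(1:ℝ)/2) (by norm_num)
    (a := l) (b := r)).mul_continuousOn (((continuous_neg.div_const 2).rexp).continuousOn.mul hφ)
  simpa only [laguerreWeight, mul_assoc, Pi.mul_apply] using h

structure ErfShape where
  (p₀ p₁ p₂ e₀ e₁ e₂ s₀ s₁ : ℝ)

namespace ErfShape

variable (c : ErfShape)

noncomputable def eval (t : ℝ) : ℝ :=
  c.p₀ + c.p₁ * t + c.p₂ * t ^ 2 + (c.e₀ + c.e₁ * t + c.e₂ * t ^ 2) * erfSqrtHalf t +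
    (c.s₀ + c.s₁ * t) * sqrtMulExp t

noncomputable def primitive (t : ℝ) : ℝ :=
  √(2 * π) * (c.p₀ + c.p₁ + 3 * c.p₂) * erfSqrtHalf t +
    √(2 * π) * (c.e₀ + c.e₁ + 3 * c.e₂) / 2 * erfSqrtHalf t ^ 2 -
    2 * (c.p₁ + 3 * c.p₂ + c.p₂ * t) * sqrtMulExp t -
    2 * (c.e₁ + 3 * c.e₂ + c.e₂ * t) * (sqrtMulExp t * erfSqrtHalf t) -
    ((2 * c.e₁ + 8 * c.e₂) / √(2 * π) + c.s₀ + c.s₁ + (2 * c.e₂ / √(2 * π) + c.s₁) * t) *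
      exp (-t) +
    ((2 * c.e₁ + 8 * c.e₂) / √(2 * π) + c.s₀ + c.s₁)

@[fun_prop]
lemma continuous_eval : Continuous c.eval := by
  unfold eval; fun_prop

@[fun_prop]
lemma continuous_primitive : Continuous c.primitive := by
  unfold primitive; fun_prop

@[simp]
lemma primitive_zero : c.primitive 0 = 0 := by
  simp only [primitive, erfSqrtHalf_zero, sqrtMulExp_zero, neg_zero, exp_zero]
  ring

lemma hasDerivAt_primitive {t : ℝ} (ht : 0 < t) :
    HasDerivAt c.primitive (laguerreWeight t * c.eval t) t := by
  have hE := hasDerivAt_erfSqrtHalf ht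
  have hS := hasDerivAt_sqrtMulExp ht
  have hexp : HasDerivAt (fun t => exp (-t)) (-exp (-t)) t := by
    simpa using (hasDerivAt_neg t).exp
  have hlin : ∀ u v : ℝ, HasDerivAt (fun t => u + v * t) v t := fun u v => by
    simpa using ((hasDerivAt_id t).const_mul v).const_add u
  have h := (((((hE.const_mul (√(2 * π) * (c.p₀ + c.p₁ + 3 * c.p₂))).add
    ((hE.pow 2).const_mul (√(2 * π) * (c.e₀ + c.e₁ + 3 * c.e₂) / 2))).sub
    (((hlin (c.p₁ + 3 * c.p₂) c.p₂).const_mul 2).mul hS)).sub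
    (((hlin (c.e₁ + 3 * c.e₂) c.e₂).const_mul 2).mul (hS.mul hE))).sub
    ((hlin ((2 * c.e₁ + 8 * c.e₂) / √(2 * π) + c.s₀ + c.s₁) (2 * c.e₂ / √(2 * π) + c.s₁)).mul
      hexp)).add_const ((2 * c.e₁ + 8 * c.e₂) / √(2 * π) + c.s₀ + c.s₁)
  refine h.congr_deriv ?_
  rw [eval, Pi.mul_apply, sqrtMulExp_eq_mul_laguerreWeight ht.le,
    exp_neg_eq_mul_laguerreWeight_sq ht]
  field_simp
  ring

lemma integral_laguerreWeight_mul_eval {l r : ℝ} (hl : 0 ≤ l) (hlr : l ≤ r) :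
    ∫ t in l..r, laguerreWeight t * c.eval t = c.primitive r - c.primitive l :=
  intervalIntegral.integral_eq_sub_of_hasDerivAt_of_le hlr c.continuous_primitive.continuousOn
    (fun _ ht => c.hasDerivAt_primitive (hl.trans_lt ht.1))
    (intervalIntegrable_laguerreWeight_mul c.continuous_eval.continuousOn)

lemma integral_eq_of_eqOn {f : ℝ → ℝ} {l r : ℝ} (hl : 0 ≤ l) (hlr : l ≤ r)
    (hf : ∀ t ∈ Set.Icc l r, f t = laguerreWeight t * c.eval t) :
    ∫ t in l..r, f t = c.primitive r - c.primitive l := by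
  rw [intervalIntegral.integral_congr (by rwa [Set.uIcc_of_le hlr]),
    c.integral_laguerreWeight_mul_eval hl hlr]

def affineMul (u v α β γ δ σ : ℝ) : ErfShape :=
  ⟨u * α, u * β + v * α, v * β, u * γ, u * δ + v * γ, v * δ, u * σ, v * σ⟩

lemma eval_affineMul (u v α β γ δ σ t : ℝ) :
    (affineMul u v α β γ δ σ).eval t =
      (u + v * t) * (α + β * t + (γ + δ * t) * erfSqrtHalf t + σ * sqrtMulExp t) := by
  simp only [eval, affineMul]
  ring

def quadratic (a b : ℝ) : ErfShape := ⟨a * b, -(a + b), 1, 0, 0, 0, 0, 0⟩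

lemma quadratic_comm (a b : ℝ) : quadratic a b = quadratic b a := by
  rw [quadratic, quadratic, mul_comm, add_comm]

end ErfShape

open ErfShape

noncomputable def absQuadIntegral (a b x : ℝ) : ℝ :=
  (quadratic a b).primitive x - 2 * (quadratic a b).primitive (max a b) +
    2 * (quadratic a b).primitive (min a b)

lemma absQuadIntegral_comm (a b x : ℝ) : absQuadIntegral a b x = absQuadIntegral b a x := by
  rw [absQuadIntegral, absQuadIntegral, quadratic_comm, max_comm, min_comm]

lemma integral_laguerreWeight_mul_abs_mul_abs_of_le {a b x : ℝ} (hb : 0 ≤ b) (hba : b ≤ a)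
    (hax : a ≤ x) :
    ∫ t in (0:ℝ)..x, laguerreWeight t * (|t - a| * |t - b|) = absQuadIntegral a b x := by
  have hint (l r : ℝ) :
      IntervalIntegrable (fun t => laguerreWeight t * (|t - a| * |t - b|)) volume l r :=
    intervalIntegrable_laguerreWeight_mul (Continuous.continuousOn (by fun_prop))
  rw [← intervalIntegral.integral_add_adjacent_intervals (hint 0 a) (hint a x),
    ← intervalIntegral.integral_add_adjacent_intervals (hint 0 b) (hint b a),
    (affineMul a (-1) b (-1) 0 0 0).integral_eq_of_eqOn le_rfl hb fun t ht => ?_,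
    (affineMul a (-1) (-b) 1 0 0 0).integral_eq_of_eqOn hb hba fun t ht => ?_,
    (affineMul (-a) 1 (-b) 1 0 0 0).integral_eq_of_eqOn (hb.trans hba) hax fun t ht => ?_,
    absQuadIntegral, max_eq_left hba, min_eq_right hba]
  · simp only [primitive, affineMul, quadratic, erfSqrtHalf_zero, sqrtMulExp_zero]
    ring
  · rw [eval_affineMul, abs_of_nonneg (by linarith [ht.1]), abs_of_nonneg (by linarith [ht.1])]
    ring
  · rw [eval_affineMul, abs_of_nonpos (by linarith [ht.2]), abs_of_nonneg (by linarith [ht.1])]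
    ring
  · rw [eval_affineMul, abs_of_nonpos (by linarith [ht.2]), abs_of_nonpos (by linarith [ht.2])]
    ring

lemma integral_laguerreWeight_mul_abs_mul_abs {a b x : ℝ} (ha : a ∈ Set.Icc 0 x)
    (hb : b ∈ Set.Icc 0 x) :
    ∫ t in (0:ℝ)..x, laguerreWeight t * (|t - a| * |t - b|) = absQuadIntegral a b x := by
  rcases le_total b a with hba | hab
  · exact integral_laguerreWeight_mul_abs_mul_abs_of_le hb.1 hba ha.2
  · simp_rw [mul_comm |_ - a|, absQuadIntegral_comm a]
    exact integral_laguerreWeight_mul_abs_mul_abs_of_le ha.1 hab hb.2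

lemma continuous_absQuadIntegral (a x : ℝ) : Continuous fun b => absQuadIntegral a b x := by
  simp only [absQuadIntegral, primitive, quadratic]
  fun_prop

noncomputable def doubleIntegralShape (x : ℝ) : ErfShape :=
  let E := erfSqrtHalf x
  let S := sqrtMulExp x
  ⟨16 - 16 * (1 + x) * exp (-x) - 4 * √(2 * π) * S * x * E,
    -32 + (32 + 8 * x) * exp (-x) + (12 + 4 * x) * √(2 * π) * S * E,
    8 - 8 * exp (-x) - 4 * √(2 * π) * S * E,
    8 * √(2 * π) * S * x, -(24 + 8 * x) * √(2 * π) * S, 8 * √(2 * π) * S,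
    -16 * S * x, 16 * S + 16 * √(2 * π) * E⟩

lemma integral_laguerreWeight_mul_abs_mul_absQuadIntegral {a x : ℝ} (ha : 0 ≤ a) (hax : a ≤ x) :
    ∫ b in (0:ℝ)..x, laguerreWeight b * (|b - a| * absQuadIntegral a b x) =
      (doubleIntegralShape x).eval a := by
  set A : ℝ → ℝ := fun t => √(2 * π) * (3 - a) * erfSqrtHalf t + 2 * (a - 3 - t) * sqrtMulExp t
    with hA
  set B : ℝ → ℝ := fun t => √(2 * π) * (a - 1) * erfSqrtHalf t + 2 * sqrtMulExp t with hB
  -- `Q_b := (quadratic a b).primitive` is affine in `b`, so on either side of `a` the integrand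
  -- is `±(a - b)` times a shape that is linear in `b`.
  have hQ (b t : ℝ) : (quadratic a b).primitive t = A t + b * B t := by
    simp only [primitive, quadratic, hA, hB]
    ring
  have hint (l r : ℝ) : IntervalIntegrable
      (fun b => laguerreWeight b * (|b - a| * absQuadIntegral a b x)) volume l r :=
    intervalIntegrable_laguerreWeight_mul
      ((continuous_abs.comp (continuous_sub_right a)).mul
        (continuous_absQuadIntegral a x)).continuousOn
  rw [← intervalIntegral.integral_add_adjacent_intervals (hint 0 a) (hint a x),
    (affineMul a (-1) (A x - 2 * A a) (B x - 2 * B a) (2 * √(2 * π) * (3 - a))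
      (2 * √(2 * π) * (a - 1)) (4 * (a - 3))).integral_eq_of_eqOn le_rfl ha fun b hb => ?_,
    (affineMul (-a) 1 (A x + 2 * A a) (B x + 2 * B a) (-2 * √(2 * π) * (3 - a))
      (-2 * √(2 * π) * (a - 1)) (-4 * (a - 3))).integral_eq_of_eqOn ha hax fun b hb => ?_]
  · simp only [primitive, affineMul, doubleIntegralShape, eval, hA, hB, erfSqrtHalf_zero,
      sqrtMulExp_zero, neg_zero, exp_zero]
    field_simp
    ring
  · rw [eval_affineMul, absQuadIntegral, max_eq_right hb.1, min_eq_left hb.1,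
      abs_of_nonneg (by linarith [hb.1]), hQ, hQ, hQ]
    simp only [hA, hB]
    ring
  · rw [eval_affineMul, absQuadIntegral, max_eq_left hb.2, min_eq_right hb.2,
      abs_of_nonpos (by linarith [hb.2]), hQ, hQ, hQ]
    simp only [hA, hB]
    ring

lemma integral_integral_laguerreWeight_mul_abs {a x : ℝ} (ha : a ∈ Set.Icc 0 x) :
    ∫ b in (0:ℝ)..x, ∫ t in (0:ℝ)..x, laguerreWeight a * laguerreWeight b * laguerreWeight t *
      (|b - a| * |t - a| * |t - b|) = laguerreWeight a * (doubleIntegralShape x).eval a := by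
  have inner (b : ℝ) (hb : b ∈ Set.uIcc 0 x) :
      ∫ t in (0:ℝ)..x, laguerreWeight a * laguerreWeight b * laguerreWeight t *
        (|b - a| * |t - a| * |t - b|) =
      laguerreWeight a * (laguerreWeight b * (|b - a| * absQuadIntegral a b x)) := by
    rw [Set.uIcc_of_le (ha.1.trans ha.2)] at hb
    simp_rw [← integral_laguerreWeight_mul_abs_mul_abs ha hb,
      ← intervalIntegral.integral_const_mul]
    congr 1
    funext t
    ring
  rw [intervalIntegral.integral_congr inner, intervalIntegral.integral_const_mul,
    integral_laguerreWeight_mul_abs_mul_absQuadIntegral ha.1 ha.2]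

lemma primitive_doubleIntegralShape (x : ℝ) :
    (doubleIntegralShape x).primitive x =
      24 * √(2 * π) * (√(2 / π) * (1 - x) * √x * exp (-x / 2) -
        √(2 / π) * √x * exp (-(3 * x) / 2) + erf √(x / 2) - (1 + x) * exp (-x) * erf √(x / 2)) := by
  have hsqrt : √(2 / π) = 2 / √(2 * π) := by
    rw [sqrt_div zero_le_two, sqrt_mul zero_le_two, div_mul_eq_div_div, div_sqrt]
  have hexp : exp (-(3 * x) / 2) = exp (-x / 2) * exp (-x) := by
    rw [← exp_add]
    ring_nf
  rw [hsqrt, hexp, ← erfSqrtHalf]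
  simp only [primitive, doubleIntegralShape, sqrtMulExp]
  field_simp
  ring

lemma Z3L_eq : Z3L = 24 * √(2 * π) := by
  have hG32 : Gamma (3 / 2) = √π / 2 := by
    rw [show (3 / 2 : ℝ) = 1 / 2 + 1 by norm_num, Gamma_add_one (by norm_num), Gamma_one_half_eq]
    ring
  have hG52 : Gamma (5 / 2) = 3 / 4 * √π := by
    rw [show (5 / 2 : ℝ) = 3 / 2 + 1 by norm_num, Gamma_add_one (by norm_num), hG32]
    ring
  have hpow : (2 : ℝ) ^ ((3 * (3 - 1) / 2 : ℝ) + 3 / 2) = 16 * √2 := by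
    rw [show (3 * (3 - 1) / 2 : ℝ) + 3 / 2 = (4 : ℕ) + 1 / 2 by norm_num,
      rpow_add zero_lt_two, rpow_natCast, ← sqrt_eq_rpow]
    norm_num
  rw [Z3L, hpow, sqrt_mul zero_le_two, Finset.prod_range_succ, Finset.prod_range_succ,
    Finset.prod_range_one]
  norm_num [Gamma_one_half_eq, hG32, hG52, Gamma_two]
  field_simp
  ring

theorem F3L_explicit (x : ℝ) (hx : 0 ≤ x) :
    F3L x =
      Real.sqrt (2 / Real.pi) * (1 - x) * Real.sqrt x * Real.exp (-x / 2) -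
        Real.sqrt (2 / Real.pi) * Real.sqrt x * Real.exp (-(3 * x) / 2) +
        erf (Real.sqrt (x / 2)) -
        (1 + x) * Real.exp (-x) * erf (Real.sqrt (x / 2)) := by
  have triple : ∫ a in (0:ℝ)..x, ∫ b in (0:ℝ)..x, ∫ t in (0:ℝ)..x,
      laguerreWeight a * laguerreWeight b * laguerreWeight t * (|b - a| * |t - a| * |t - b|) =
      (doubleIntegralShape x).primitive x := by
    rw [intervalIntegral.integral_congr fun a ha =>
        integral_integral_laguerreWeight_mul_abs (by rwa [Set.uIcc_of_le hx] at ha),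
      integral_laguerreWeight_mul_eval _ le_rfl hx, primitive_zero, sub_zero]
  unfold laguerreWeight at triple
  rw [F3L, triple, primitive_doubleIntegralShape, Z3L_eq]
  field_simp
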